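/- arXiv:1007.3433 — 5 statements merged into one kernel-verified Lean document; each statement's English description precedes it below -/
import Mathlib

section
/- Let X be a metric space and f a bounded uniformly continuous function on X with sup norm bound M and modulus of continuity θ (i.e., d(x,y) < θ implies |f(x) − f(y)| < ε). Then the function g(y) := sup over x of (f(x) − ε − n·d(x,y)), where n ≥ max(M + ε, 2M/θ), is Lipschitz with constant n, bounded by n, and satisfies f − ε ≤ g ≤ f. -/
/-- with g(y) := ⨆ x, (f x − ε − n·d(x,y)), where f is bounded by M,
uniformly continuous with modulus θ for ε, and n ≥ max(M+ε, 2M/θ), the function g is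
n-Lipschitz, bounded by n, and f − ε ≤ g ≤ f. -/
theorem sup_convolution_approx {X : Type*} [MetricSpace X]
    (f : X → ℝ) (M ε θ : ℝ) (hε : 0 < ε) (hθ : 0 < θ)
    (hf_bd : ∀ x, |f x| ≤ M)
    (hf_mod : ∀ x y, dist x y < θ → |f x - f y| < ε)
    (n : ℕ) (hn : max (M + ε) (2 * M / θ) ≤ (n : ℝ)) :
    LipschitzWith (n : NNReal) (fun y => ⨆ x, (f x - ε - n * dist x y)) ∧
    (∀ y, |(⨆ x, (f x - ε - n * dist x y))| ≤ (n : ℝ)) ∧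
    (∀ y, f y - ε ≤ ⨆ x, (f x - ε - n * dist x y)) ∧
    (∀ y, (⨆ x, (f x - ε - n * dist x y)) ≤ f y) := by
  rcases isEmpty_or_nonempty X with hX | hX
  · exact ⟨fun y => (hX.false y).elim, fun y => (hX.false y).elim,
      fun y => (hX.false y).elim, fun y => (hX.false y).elim⟩
  have hM : 0 ≤ M := le_trans (abs_nonneg _) (hf_bd hX.some)
  have hn1 : M + ε ≤ (n : ℝ) := le_trans (le_max_left _ _) hn
  have hn2 : 2 * M / θ ≤ (n : ℝ) := le_trans (le_max_right _ _) hn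
  have hn2' : 2 * M ≤ (n : ℝ) * θ := by
    rw [div_le_iff₀ hθ] at hn2; linarith
  have hn0 : (0 : ℝ) ≤ n := n.cast_nonneg
  have hbdd : ∀ y : X, BddAbove (Set.range fun x => f x - ε - n * dist x y) := by
    intro y
    refine ⟨M, ?_⟩
    rintro _ ⟨x, rfl⟩
    have h1 := (abs_le.1 (hf_bd x)).2
    have h2 : (0:ℝ) ≤ n * dist x y := mul_nonneg hn0 dist_nonneg
    simp only
    linarith
  have hle : ∀ y, (⨆ x, (f x - ε - n * dist x y)) ≤ f y := by
    intro y
    apply ciSup_le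
    intro x
    by_cases h : dist x y < θ
    · have h1 := (abs_lt.1 (hf_mod x y h)).2
      have h2 : (0:ℝ) ≤ n * dist x y := mul_nonneg hn0 dist_nonneg
      linarith
    · push_neg at h
      have h1 := (abs_le.1 (hf_bd x)).2
      have h2 := (abs_le.1 (hf_bd y)).1
      have h3 : (n:ℝ) * θ ≤ n * dist x y := mul_le_mul_of_nonneg_left h hn0
      linarith
  have hge : ∀ y, f y - ε ≤ ⨆ x, (f x - ε - n * dist x y) := by
    intro y
    have := le_ciSup (hbdd y) y
    simpa using this
  have key : ∀ y z : X, (⨆ x, (f x - ε - n * dist x y)) ≤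
      (⨆ x, (f x - ε - n * dist x z)) + n * dist y z := by
    intro y z
    apply ciSup_le
    intro x
    have h1 : f x - ε - n * dist x z ≤ ⨆ x, (f x - ε - n * dist x z) :=
      le_ciSup (hbdd z) x
    have h2 : dist x y ≥ dist x z - dist y z := by
      have := dist_triangle x y z
      have := dist_comm y z
      linarith [dist_triangle x y z]
    nlinarith [mul_le_mul_of_nonneg_left h2 hn0]
  refine ⟨?_, ?_, hge, hle⟩
  · rw [lipschitzWith_iff_dist_le_mul]
    intro y z
    rw [Real.dist_eq, abs_sub_le_iff]
    push_cast
    constructor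
    · have := key y z
      linarith
    · have := key z y
      rw [dist_comm z y] at this
      linarith
  · intro y
    rw [abs_le]
    have h1 := (abs_le.1 (hf_bd y)).1
    have h2 := (abs_le.1 (hf_bd y)).2
    exact ⟨by linarith [hge y], by linarith [hle y]⟩
end

section
/- The map ‖μ‖_d := sup { ∫ f dμ : ‖f‖_∞ ≤ 1, f 1-Lipschitz } is a norm on the vector space of bounded signed tight Borel measures on a metric space X; in particular ‖μ‖_d = 0 implies μ = 0. -/
open MeasureTheory

/-- Integral of a real function against a signed measure, via the Jordan decomposition. -/
noncomputable def sInt {X : Type*} [MeasurableSpace X] (s : SignedMeasure X) (f : X → ℝ) : ℝ :=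
  (∫ x, f x ∂s.toJordanDecomposition.posPart) - ∫ x, f x ∂s.toJordanDecomposition.negPart

/-- The bounded-Lipschitz norm `‖s‖_d` of a signed measure. -/
noncomputable def blNorm {X : Type*} [MetricSpace X] [MeasurableSpace X]
    (s : SignedMeasure X) : ℝ :=
  ⨆ f : {f : X → ℝ // (∀ x, |f x| ≤ 1) ∧ LipschitzWith 1 f}, sInt s f.1

/-- A signed measure is tight if its total variation is inner regular by compact sets. -/
def Tight {X : Type*} [MetricSpace X] [MeasurableSpace X] (s : SignedMeasure X) : Prop :=
  s.totalVariation.InnerRegular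

open scoped NNReal

/-! For `c ≥ 0` and for sums, `sInt` is linear in the measure on bounded measurable functions,
since it can be computed from any decomposition `s = μ - ν` into finite measures, not only from
the Jordan decomposition; negative scalars reduce to `c ≥ 0` because the unit ball is symmetric.
If `‖s‖_d = 0`, the two Jordan parts of `s` have the same integral against every function in the
unit ball, hence, after rescaling, against the thickened indicators of a closed set. These
converge to its indicator, so the two parts agree on closed sets, and then on all Borel sets. -/

section BLUnitBall

variable (X : Type*) [PseudoEMetricSpace X]

def blUnitBall : Set (X → ℝ) := {f | (∀ x, |f x| ≤ 1) ∧ LipschitzWith 1 f}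

variable {X}

lemma zero_mem_blUnitBall : (0 : X → ℝ) ∈ blUnitBall X :=
  ⟨fun x => by simp, (LipschitzWith.const' 0).weaken zero_le_one⟩

lemma neg_mem_blUnitBall {f : X → ℝ} (hf : f ∈ blUnitBall X) : -f ∈ blUnitBall X :=
  ⟨fun x => by simpa using hf.1 x, hf.2.neg⟩

instance : Nonempty (blUnitBall X) := ⟨⟨0, zero_mem_blUnitBall⟩⟩

lemma exists_pos_smul_mem_blUnitBall {f : X → ℝ} {K : ℝ≥0} {C : ℝ}
    (hf : LipschitzWith K f) (hC : ∀ x, |f x| ≤ C) :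
    ∃ M : ℝ, 0 < M ∧ M⁻¹ • f ∈ blUnitBall X := by
  set M : ℝ := max (max K C) 1
  have hM : 0 < M := lt_max_of_lt_right one_pos
  have hKM : (K : ℝ) ≤ M := (le_max_left _ _).trans (le_max_left _ _)
  have hCM : C ≤ M := (le_max_right _ _).trans (le_max_left _ _)
  refine ⟨M, hM, fun x => ?_, ((lipschitzWith_smul M⁻¹).comp hf).weaken ?_⟩
  · rw [Pi.smul_apply, smul_eq_mul, abs_mul, abs_of_pos (inv_pos.2 hM), inv_mul_le_iff₀ hM]
    linarith [hC x]
  · rw [← NNReal.coe_le_coe, NNReal.coe_mul, coe_nnnorm, Real.norm_of_nonneg (inv_nonneg.2 hM.le),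
      NNReal.coe_one, inv_mul_le_iff₀ hM, mul_one]
    exact hKM

lemma integral_eq_of_forall_mem_blUnitBall [MeasurableSpace X] {μ ν : Measure X}
    (h : ∀ f ∈ blUnitBall X, ∫ x, f x ∂μ = ∫ x, f x ∂ν) {f : X → ℝ} {K : ℝ≥0} {C : ℝ}
    (hf : LipschitzWith K f) (hC : ∀ x, |f x| ≤ C) :
    ∫ x, f x ∂μ = ∫ x, f x ∂ν := by
  obtain ⟨M, hM, hg⟩ := exists_pos_smul_mem_blUnitBall hf hC
  have hscaled := h _ hg
  simp only [Pi.smul_apply, smul_eq_mul, integral_const_mul] at hscaled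
  exact mul_left_cancel₀ (inv_ne_zero hM.ne') hscaled

theorem MeasureTheory.Measure.ext_of_forall_mem_blUnitBall_integral_eq [MeasurableSpace X]
    [BorelSpace X] {μ ν : Measure X} [IsFiniteMeasure μ] [IsFiniteMeasure ν]
    (h : ∀ f ∈ blUnitBall X, ∫ x, f x ∂μ = ∫ x, f x ∂ν) : μ = ν := by
  have hδ : ∀ n : ℕ, (0 : ℝ) < 1 / (n + 1) := fun _ => Nat.one_div_pos_of_nat
  have hclosed : ∀ F : Set X, IsClosed F → μ F = ν F := by
    intro F hF
    have hint : ∀ n, ∫ x, (thickenedIndicator (hδ n) F x : ℝ) ∂μ =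
        ∫ x, (thickenedIndicator (hδ n) F x : ℝ) ∂ν := fun n =>
      integral_eq_of_forall_mem_blUnitBall h
        (NNReal.isometry_coe.lipschitz.comp (lipschitzWith_thickenedIndicator (hδ n) F))
        (fun x => by rw [NNReal.abs_eq]; exact_mod_cast thickenedIndicator_le_one (hδ n) F x)
    have hμ := tendsto_integral_thickenedIndicator_of_isClosed μ hF hδ
      tendsto_one_div_add_atTop_nhds_zero_nat
    have hν := tendsto_integral_thickenedIndicator_of_isClosed ν hF hδ
      tendsto_one_div_add_atTop_nhds_zero_nat
    simp only [hint] at hμ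
    exact (measureReal_eq_measureReal_iff).1 (tendsto_nhds_unique hμ hν)
  refine ext_of_generate_finite _ ?_ isPiSystem_isClosed (fun F hF => hclosed F hF)
    (hclosed _ isClosed_univ)
  rw [BorelSpace.measurable_eq (α := X), borel_eq_generateFrom_isClosed]

end BLUnitBall

section SInt

variable {X : Type*} [MeasurableSpace X]

lemma integral_sub_integral_eq_of_toSignedMeasure_sub_eq {μ₁ ν₁ μ₂ ν₂ : Measure X}
    [IsFiniteMeasure μ₁] [IsFiniteMeasure ν₁] [IsFiniteMeasure μ₂] [IsFiniteMeasure ν₂]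
    (h : μ₁.toSignedMeasure - ν₁.toSignedMeasure = μ₂.toSignedMeasure - ν₂.toSignedMeasure)
    {f : X → ℝ} (hf : Measurable f) {C : ℝ} (hC : ∀ x, |f x| ≤ C) :
    ∫ x, f x ∂μ₁ - ∫ x, f x ∂ν₁ = ∫ x, f x ∂μ₂ - ∫ x, f x ∂ν₂ := by
  have hsum : μ₁ + ν₂ = μ₂ + ν₁ := by
    rw [← Measure.toSignedMeasure_eq_toSignedMeasure_iff, Measure.toSignedMeasure_add,
      Measure.toSignedMeasure_add, ← sub_eq_sub_iff_add_eq_add, h]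
  have hint : ∀ (ρ : Measure X) [IsFiniteMeasure ρ], Integrable f ρ := fun ρ _ =>
    .of_bound hf.aestronglyMeasurable C (ae_of_all _ hC)
  have key := congrArg (fun ρ => ∫ x, f x ∂ρ) hsum
  simp only [integral_add_measure (hint _) (hint _)] at key
  linarith

lemma sInt_eq_integral_sub_integral {s : SignedMeasure X} {μ ν : Measure X}
    [IsFiniteMeasure μ] [IsFiniteMeasure ν] (hs : s = μ.toSignedMeasure - ν.toSignedMeasure)
    {f : X → ℝ} (hf : Measurable f) {C : ℝ} (hC : ∀ x, |f x| ≤ C) :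
    sInt s f = ∫ x, f x ∂μ - ∫ x, f x ∂ν :=
  integral_sub_integral_eq_of_toSignedMeasure_sub_eq
    (s.toSignedMeasure_toJordanDecomposition.trans hs) hf hC

lemma sInt_neg_right (s : SignedMeasure X) (f : X → ℝ) : sInt s (-f) = -sInt s f := by
  simp only [sInt, Pi.neg_apply, integral_neg]
  ring

lemma sInt_neg_left (s : SignedMeasure X) (f : X → ℝ) : sInt (-s) f = -sInt s f := by
  simp only [sInt, SignedMeasure.toJordanDecomposition_neg, JordanDecomposition.neg_posPart,
    JordanDecomposition.neg_negPart]
  ring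

lemma sInt_add_left (s t : SignedMeasure X) {f : X → ℝ} (hf : Measurable f) {C : ℝ}
    (hC : ∀ x, |f x| ≤ C) : sInt (s + t) f = sInt s f + sInt t f := by
  set js := s.toJordanDecomposition
  set jt := t.toJordanDecomposition
  have hst : s + t = (js.posPart + jt.posPart).toSignedMeasure -
      (js.negPart + jt.negPart).toSignedMeasure := by
    conv_lhs => rw [← s.toSignedMeasure_toJordanDecomposition,
      ← t.toSignedMeasure_toJordanDecomposition]
    simp only [JordanDecomposition.toSignedMeasure, Measure.toSignedMeasure_add]
    abel
  have hint : ∀ (ρ : Measure X) [IsFiniteMeasure ρ], Integrable f ρ := fun ρ _ =>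
    .of_bound hf.aestronglyMeasurable C (ae_of_all _ hC)
  rw [sInt_eq_integral_sub_integral hst hf hC, integral_add_measure (hint _) (hint _),
    integral_add_measure (hint _) (hint _), sInt, sInt]
  ring

lemma sInt_smul_left {c : ℝ} (hc : 0 ≤ c) (s : SignedMeasure X) {f : X → ℝ} (hf : Measurable f)
    {C : ℝ} (hC : ∀ x, |f x| ≤ C) : sInt (c • s) f = c * sInt s f := by
  set j := s.toJordanDecomposition
  have hcs : c • s = (c.toNNReal • j.posPart).toSignedMeasure -
      (c.toNNReal • j.negPart).toSignedMeasure := by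
    rw [Measure.toSignedMeasure_smul, Measure.toSignedMeasure_smul, NNReal.smul_def,
      NNReal.smul_def, Real.coe_toNNReal c hc]
    conv_lhs => rw [← s.toSignedMeasure_toJordanDecomposition]
    exact smul_sub c _ _
  rw [sInt_eq_integral_sub_integral hcs hf hC, integral_smul_nnreal_measure,
    integral_smul_nnreal_measure, NNReal.smul_def, NNReal.smul_def, Real.coe_toNNReal c hc, sInt]
  simp only [smul_eq_mul]
  ring

lemma abs_sInt_le (s : SignedMeasure X) {f : X → ℝ} {C : ℝ} (hC : ∀ x, |f x| ≤ C) :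
    |sInt s f| ≤ C * (s.toJordanDecomposition.posPart.real Set.univ +
      s.toJordanDecomposition.negPart.real Set.univ) := by
  have hbound (μ : Measure X) [IsFiniteMeasure μ] : |∫ x, f x ∂μ| ≤ C * μ.real Set.univ := by
    simpa using norm_integral_le_of_norm_le_const (μ := μ)
      (ae_of_all _ fun x => (Real.norm_eq_abs (f x)).trans_le (hC x))
  rw [mul_add]
  exact (abs_sub _ _).trans (add_le_add (hbound _) (hbound _))

end SInt

section BLNorm

variable {X : Type*} [MetricSpace X] [MeasurableSpace X]

lemma blNorm_eq_iSup (s : SignedMeasure X) : blNorm s = ⨆ f : blUnitBall X, sInt s f := rfl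

lemma sInt_le_blNorm (s : SignedMeasure X) {f : X → ℝ} (hf : f ∈ blUnitBall X) :
    sInt s f ≤ blNorm s :=
  le_ciSup (f := fun g : blUnitBall X => sInt s g)
    ⟨_, Set.forall_mem_range.2 fun g => (le_abs_self _).trans (abs_sInt_le s g.2.1)⟩
    ⟨f, hf⟩

lemma abs_sInt_le_blNorm (s : SignedMeasure X) {f : X → ℝ} (hf : f ∈ blUnitBall X) :
    |sInt s f| ≤ blNorm s :=
  abs_le'.2 ⟨sInt_le_blNorm s hf, sInt_neg_right s f ▸ sInt_le_blNorm s (neg_mem_blUnitBall hf)⟩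

lemma blNorm_nonneg (s : SignedMeasure X) : 0 ≤ blNorm s :=
  (abs_nonneg _).trans (abs_sInt_le_blNorm s zero_mem_blUnitBall)

lemma blNorm_neg (s : SignedMeasure X) : blNorm (-s) = blNorm s := by
  have hle : ∀ t : SignedMeasure X, blNorm (-t) ≤ blNorm t := fun t =>
    (blNorm_eq_iSup _).trans_le <| ciSup_le fun f => by
      rw [sInt_neg_left, ← sInt_neg_right]
      exact sInt_le_blNorm t (neg_mem_blUnitBall f.2)
  exact (hle s).antisymm (by simpa using hle (-s))

lemma blNorm_smul_of_nonneg [OpensMeasurableSpace X] {c : ℝ} (hc : 0 ≤ c) (s : SignedMeasure X) :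
    blNorm (c • s) = c * blNorm s := by
  simp only [blNorm_eq_iSup, Real.mul_iSup_of_nonneg hc]
  exact iSup_congr fun f => sInt_smul_left hc s f.2.2.continuous.measurable f.2.1

lemma blNorm_smul [OpensMeasurableSpace X] (c : ℝ) (s : SignedMeasure X) :
    blNorm (c • s) = |c| * blNorm s := by
  rcases le_or_gt 0 c with hc | hc
  · rw [abs_of_nonneg hc, blNorm_smul_of_nonneg hc]
  · rw [abs_of_neg hc, ← blNorm_smul_of_nonneg (neg_nonneg.2 hc.le),
      show (-c) • s = -(c • s) from neg_smul c s, blNorm_neg]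

lemma blNorm_zero : blNorm (0 : SignedMeasure X) = 0 := by
  simp [blNorm, sInt, SignedMeasure.toJordanDecomposition_zero]

lemma blNorm_add_le [OpensMeasurableSpace X] (s t : SignedMeasure X) :
    blNorm (s + t) ≤ blNorm s + blNorm t :=
  (blNorm_eq_iSup _).trans_le <| ciSup_le fun f => by
    rw [sInt_add_left s t f.2.2.continuous.measurable f.2.1]
    exact add_le_add (sInt_le_blNorm s f.2) (sInt_le_blNorm t f.2)

lemma eq_zero_of_forall_sInt_eq_zero [BorelSpace X] {s : SignedMeasure X}
    (h : ∀ f ∈ blUnitBall X, sInt s f = 0) : s = 0 := by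
  have hpn : s.toJordanDecomposition.posPart = s.toJordanDecomposition.negPart :=
    Measure.ext_of_forall_mem_blUnitBall_integral_eq fun f hf => sub_eq_zero.1 (h f hf)
  rw [← s.toSignedMeasure_toJordanDecomposition, JordanDecomposition.toSignedMeasure,
    Measure.toSignedMeasure_congr hpn, sub_self]

lemma blNorm_eq_zero_iff [BorelSpace X] {s : SignedMeasure X} : blNorm s = 0 ↔ s = 0 := by
  refine ⟨fun h => eq_zero_of_forall_sInt_eq_zero fun f hf => ?_, fun h => h ▸ blNorm_zero⟩
  exact abs_nonpos_iff.1 (h ▸ abs_sInt_le_blNorm s hf)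

end BLNorm

/-- `‖·‖_d` is a norm on the vector space of bounded signed tight Borel
measures: it is nonnegative, vanishes exactly at `0`, is absolutely homogeneous and
satisfies the triangle inequality. -/
theorem blNorm_is_norm (X : Type*) [MetricSpace X] [MeasurableSpace X] [BorelSpace X] :
    (∀ s : SignedMeasure X, Tight s → 0 ≤ blNorm s) ∧
    (∀ s : SignedMeasure X, Tight s → (blNorm s = 0 ↔ s = 0)) ∧
    (∀ (c : ℝ) (s : SignedMeasure X), Tight s → blNorm (c • s) = |c| * blNorm s) ∧
    (∀ s t : SignedMeasure X, Tight s → Tight t → blNorm (s + t) ≤ blNorm s + blNorm t) :=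
  ⟨fun s _ => blNorm_nonneg s, fun _ _ => blNorm_eq_zero_iff, fun c s _ => blNorm_smul c s,
    fun s t _ _ => blNorm_add_le s t⟩
end

section
/- Let X be a metric space and μ_j, ν_j tight probability measures on X. Then ‖μ_j − ν_j‖_d → 0 in the bounded-Lipschitz norm if and only if ρ(μ_j, ν_j) → 0, where ρ is the Lévy–Prokhorov metric. -/
/-!
The two distances control each other: `‖μ - ν‖_d ≤ 3 ρ(μ, ν)` and `ρ(μ, ν) ≤ √‖μ - ν‖_d`.

For the first bound, shift a test function `f` to `g = f + 1 ∈ [0, 2]` and write `∫ g` by the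
layer-cake formula. The Lévy–Prokhorov inequality `μ {g ≥ t} ≤ ν ({g ≥ t}^ε) + ε` costs `2ε`
after integration over `t ∈ (0, 2]`, and since `g` is 1-Lipschitz, `{g ≥ t}^ε ⊆ {g ≥ t - ε}`,
which costs one more `ε`.

For the second, the 1-Lipschitz bump `x ↦ max 0 (δ - d(x, B))` lies between `δ 1_B` and
`δ 1_{B^δ}`, so `δ μ(B) ≤ δ ν(B^δ) + ‖μ - ν‖_d`; with `‖μ - ν‖_d ≤ ε² < δ²` this gives
`μ(B) ≤ ν(B^δ) + δ`.
-/

open MeasureTheory Filter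

/-- The bounded-Lipschitz distance `‖μ − ν‖_d`. -/
noncomputable def blDist {X : Type*} [MetricSpace X] [MeasurableSpace X]
    (μ ν : Measure X) : ℝ :=
  ⨆ f : {f : X → ℝ // (∀ x, |f x| ≤ 1) ∧ LipschitzWith 1 f},
    (∫ x, f.1 x ∂μ - ∫ x, f.1 x ∂ν)

open Metric Set
open scoped NNReal

lemma LipschitzWith.thickening_setOf_le_subset {X : Type*} [PseudoMetricSpace X] {K : ℝ≥0}
    {g : X → ℝ} (hg : LipschitzWith K g) (ε t : ℝ) :
    thickening ε {x | t ≤ g x} ⊆ {x | t - K * ε ≤ g x} := by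
  intro x hx
  obtain ⟨y, hy, hxy⟩ := mem_thickening_iff.mp hx
  have hgy : g y - g x ≤ K * ε :=
    calc g y - g x ≤ dist (g y) (g x) := (le_abs_self _).trans_eq (Real.dist_eq _ _).symm
      _ ≤ K * dist y x := hg.dist_le_mul y x
      _ ≤ K * ε := by rw [dist_comm]; gcongr
  have hty : t ≤ g y := hy
  show t - K * ε ≤ g x
  linarith

lemma intervalIntegral_comp_sub_le_add_of_antitone {F : ℝ → ℝ} (hF : Antitone F)
    (hF0 : ∀ s, 0 ≤ F s) (hF1 : ∀ s, F s ≤ 1) {ε M : ℝ} (hε : 0 ≤ ε) (hM : 0 ≤ M) :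
    ∫ t in (0 : ℝ)..M, F (t - ε) ≤ ε + ∫ t in (0 : ℝ)..M, F t := by
  have hFi : ∀ a b : ℝ, IntervalIntegrable F volume a b := fun _ _ ↦ hF.intervalIntegrable
  have h_head : ∫ s in (-ε)..0, F s ≤ ε := by
    simpa using intervalIntegral.integral_mono_on (a := -ε) (b := 0) (by linarith) (hFi _ _)
      intervalIntegrable_const (fun s _ ↦ hF1 s)
  calc ∫ t in (0 : ℝ)..M, F (t - ε) = ∫ s in (-ε)..(M - ε), F s := by
        rw [intervalIntegral.integral_comp_sub_right, zero_sub]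
    _ ≤ ∫ s in (-ε)..M, F s :=
        intervalIntegral.integral_mono_interval le_rfl (by linarith) (by linarith)
          (Eventually.of_forall hF0) (hFi _ _)
    _ = (∫ s in (-ε)..0, F s) + ∫ s in (0 : ℝ)..M, F s :=
        (intervalIntegral.integral_add_adjacent_intervals (hFi _ _) (hFi _ _)).symm
    _ ≤ ε + ∫ t in (0 : ℝ)..M, F t := by gcongr

lemma BoundedContinuousFunction.integral_le_integral_add_of_levyProkhorovEDist_lt
    {X : Type*} [PseudoMetricSpace X] [MeasurableSpace X] [OpensMeasurableSpace X]
    (μ ν : Measure X) [IsFiniteMeasure μ] [IsProbabilityMeasure ν] {ε : ℝ} (hε : 0 < ε)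
    (hμν : levyProkhorovEDist μ ν < ENNReal.ofReal ε) (g : BoundedContinuousFunction X ℝ)
    (hg0 : 0 ≤ g) (hg : LipschitzWith 1 g) :
    ∫ x, g x ∂μ ≤ ∫ x, g x ∂ν + ε * (1 + ‖g‖) := by
  set F : ℝ → ℝ := fun t ↦ ν.real {x | t ≤ g x}
  have hF : Antitone F := fun s t hst ↦ measureReal_mono fun x hx ↦ hst.trans hx
  have hG : Antitone fun t ↦ ν.real (thickening ε {x | t ≤ g x}) := fun s t hst ↦
    measureReal_mono (thickening_subset_of_subset ε fun x hx ↦ hst.trans hx)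
  have h_thick : ∀ t, ν.real (thickening ε {x | t ≤ g x}) ≤ F (t - ε) := fun t ↦
    measureReal_mono (by simpa using hg.thickening_setOf_le_subset ε t)
  have h_layer : ∫ x, g x ∂ν = ∫ t in (0 : ℝ)..‖g‖, F t := by
    rw [intervalIntegral.integral_of_le (norm_nonneg g)]
    exact g.integral_eq_integral_meas_le ν (Eventually.of_forall hg0)
  calc ∫ x, g x ∂μ
      ≤ (∫ t in Ioc 0 ‖g‖, ν.real (thickening ε {x | t ≤ g x})) + ε * ‖g‖ :=
        g.integral_le_of_levyProkhorovEDist_lt μ ν hε hμν (Eventually.of_forall hg0)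
    _ ≤ (∫ t in (0 : ℝ)..‖g‖, F (t - ε)) + ε * ‖g‖ := by
        rw [← intervalIntegral.integral_of_le (norm_nonneg g)]
        gcongr
        exact intervalIntegral.integral_mono_on (norm_nonneg g) hG.intervalIntegrable
          (hF.comp_monotone fun _ _ h ↦ sub_le_sub_right h ε).intervalIntegrable
          fun t _ ↦ h_thick t
    _ ≤ (ε + ∫ t in (0 : ℝ)..‖g‖, F t) + ε * ‖g‖ := by
        gcongr
        exact intervalIntegral_comp_sub_le_add_of_antitone hF (fun _ ↦ measureReal_nonneg)
          (fun _ ↦ measureReal_le_one) hε.le (norm_nonneg g)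
    _ = ∫ x, g x ∂ν + ε * (1 + ‖g‖) := by rw [h_layer]; ring

section BoundedLipschitz

variable {X : Type*} [MetricSpace X] [MeasurableSpace X] (μ ν : Measure X)

lemma blDist_bddAbove [IsFiniteMeasure μ] [IsFiniteMeasure ν] :
    BddAbove (range fun f : {f : X → ℝ // (∀ x, |f x| ≤ 1) ∧ LipschitzWith 1 f} ↦
      ∫ x, f.1 x ∂μ - ∫ x, f.1 x ∂ν) := by
  refine ⟨μ.real univ + ν.real univ, ?_⟩
  rintro _ ⟨⟨f, hf, -⟩, rfl⟩
  have h_norm : ∀ (κ : Measure X) [IsFiniteMeasure κ], |∫ x, f x ∂κ| ≤ κ.real univ := by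
    intro κ _
    simpa using norm_integral_le_of_norm_le_const (μ := κ) (C := 1)
      (Eventually.of_forall (p := fun x ↦ ‖f x‖ ≤ 1) hf)
  have hμ := abs_le.mp (h_norm μ)
  have hν := abs_le.mp (h_norm ν)
  simp only
  linarith [hμ.2, hν.1]

variable {μ ν} in
lemma sub_integral_le_blDist [IsFiniteMeasure μ] [IsFiniteMeasure ν] {f : X → ℝ}
    (hf : ∀ x, |f x| ≤ 1) (hf_lip : LipschitzWith 1 f) :
    ∫ x, f x ∂μ - ∫ x, f x ∂ν ≤ blDist μ ν :=
  le_ciSup (blDist_bddAbove μ ν) ⟨f, hf, hf_lip⟩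

lemma blDist_nonneg [IsFiniteMeasure μ] [IsFiniteMeasure ν] : 0 ≤ blDist μ ν := by
  simpa using sub_integral_le_blDist (μ := μ) (ν := ν) (f := 0) (by simp) (LipschitzWith.const' 0)

variable [OpensMeasurableSpace X]

lemma blDist_le_of_levyProkhorovDist_lt [IsProbabilityMeasure μ] [IsProbabilityMeasure ν]
    {ε : ℝ} (hε : 0 < ε) (h : levyProkhorovDist μ ν < ε) : blDist μ ν ≤ 3 * ε := by
  have hμν : levyProkhorovEDist μ ν < ENNReal.ofReal ε :=
    (ENNReal.lt_ofReal_iff_toReal_lt (levyProkhorovEDist_ne_top μ ν)).mpr h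
  refine Real.iSup_le (fun ⟨f, hf, hf_lip⟩ ↦ ?_) (by positivity)
  have hf_bdd : ∀ x, ‖f x + 1‖ ≤ 2 := fun x ↦ by
    rw [Real.norm_eq_abs, abs_le]; constructor <;> linarith [abs_le.mp (hf x)]
  set g : BoundedContinuousFunction X ℝ :=
    .ofNormedAddCommGroup (f · + 1) (hf_lip.continuous.add continuous_const) 2 hf_bdd
  have hg : ⇑g = fun x ↦ f x + 1 := rfl
  have hg0 : 0 ≤ g := fun x ↦ show 0 ≤ f x + 1 by linarith [abs_le.mp (hf x)]
  have hg_lip : LipschitzWith 1 g := by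
    simpa [hg] using hf_lip.add (LipschitzWith.const' 1 (K := 0))
  have hg_norm : ‖g‖ ≤ 2 :=
    BoundedContinuousFunction.norm_ofNormedAddCommGroup_le _ (by norm_num) _
  have h_int : ∀ (κ : Measure X) [IsProbabilityMeasure κ], ∫ x, g x ∂κ = ∫ x, f x ∂κ + 1 := by
    intro κ _
    have hf_int : Integrable f κ := .of_bound hf_lip.continuous.aestronglyMeasurable 1
      (Eventually.of_forall (p := fun x ↦ ‖f x‖ ≤ 1) hf)
    simp [g, integral_add hf_int (integrable_const 1)]
  have key := g.integral_le_integral_add_of_levyProkhorovEDist_lt μ ν hε hμν hg0 hg_lip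
  have h_err : ε * (1 + ‖g‖) ≤ 3 * ε := by nlinarith
  rw [h_int μ, h_int ν] at key
  linarith

lemma blDist_le_three_mul_levyProkhorovDist [IsProbabilityMeasure μ] [IsProbabilityMeasure ν] :
    blDist μ ν ≤ 3 * levyProkhorovDist μ ν := by
  refine le_of_forall_gt_imp_ge_of_dense fun a ha ↦ ?_
  have h_pos : 0 < a / 3 := by linarith [show 0 ≤ levyProkhorovDist μ ν from ENNReal.toReal_nonneg]
  simpa [mul_div_cancel₀] using blDist_le_of_levyProkhorovDist_lt μ ν h_pos (by linarith)

lemma mul_measureReal_le_mul_measureReal_thickening_add_blDist [IsFiniteMeasure μ]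
    [IsFiniteMeasure ν] {δ : ℝ} (hδ0 : 0 < δ) (hδ1 : δ ≤ 1) {B : Set X} (hB : MeasurableSet B) :
    δ * μ.real B ≤ δ * ν.real (thickening δ B) + blDist μ ν := by
  rcases B.eq_empty_or_nonempty with rfl | hB_ne
  · simpa using blDist_nonneg μ ν
  set T := thickening δ B
  have hT : MeasurableSet T := isOpen_thickening.measurableSet
  set h : X → ℝ := fun x ↦ max 0 (δ - infDist x B)
  have h_lip : LipschitzWith 1 h := by
    simpa using ((LipschitzWith.const' δ (K := 0)).sub (lipschitz_infDist_pt B)).const_max 0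
  have h_abs : ∀ x, |h x| ≤ 1 := fun x ↦ by
    rw [abs_of_nonneg (le_max_left _ _)]
    exact max_le zero_le_one (by linarith [infDist_nonneg (x := x) (s := B)])
  have h_ge : B.indicator (fun _ ↦ δ) ≤ h := fun x ↦ by
    by_cases hx : x ∈ B
    · simp [h, hx, infDist_zero_of_mem hx]
    · simp [hx, h]
  have h_le : h ≤ T.indicator (fun _ ↦ δ) := fun x ↦ by
    by_cases hx : x ∈ T
    · simp only [h, hx, indicator_of_mem]
      exact max_le hδ0.le (by linarith [infDist_nonneg (x := x) (s := B)])
    · have : δ ≤ infDist x B :=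
        not_lt.mp fun hlt ↦ hx ((mem_thickening_iff_infDist_lt hB_ne).mpr hlt)
      simp only [h, hx, not_false_eq_true, indicator_of_notMem]
      exact max_le le_rfl (by linarith)
  have h_int : ∀ (κ : Measure X) [IsFiniteMeasure κ], Integrable h κ := fun κ _ ↦
    .of_bound h_lip.continuous.aestronglyMeasurable 1
      (Eventually.of_forall (p := fun x ↦ ‖h x‖ ≤ 1) h_abs)
  calc δ * μ.real B = ∫ x, B.indicator (fun _ ↦ δ) x ∂μ := by
        rw [integral_indicator_const _ hB, smul_eq_mul, mul_comm]
    _ ≤ ∫ x, h x ∂μ := integral_mono ((integrable_const δ).indicator hB) (h_int μ) h_ge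
    _ ≤ ∫ x, h x ∂ν + blDist μ ν := by
        linarith [sub_integral_le_blDist (μ := μ) (ν := ν) h_abs h_lip]
    _ ≤ ∫ x, T.indicator (fun _ ↦ δ) x ∂ν + blDist μ ν := add_le_add_left
        (integral_mono (h_int ν) ((integrable_const δ).indicator hT) h_le) _
    _ = δ * ν.real T + blDist μ ν := by
        rw [integral_indicator_const _ hT, smul_eq_mul, mul_comm]

lemma levyProkhorovDist_le_of_blDist_le_sq [IsProbabilityMeasure μ] [IsProbabilityMeasure ν]
    {ε : ℝ} (hε : 0 < ε) (h : blDist μ ν ≤ ε ^ 2) : levyProkhorovDist μ ν ≤ ε := by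
  refine levyProkhorovDist_le_of_forall_le μ ν hε.le fun δ B hεδ hB ↦ ?_
  rcases le_or_gt 1 δ with hδ1 | hδ1
  · calc μ B ≤ 1 := prob_le_one
      _ ≤ ENNReal.ofReal δ := ENNReal.one_le_ofReal.mpr hδ1
      _ ≤ ν (thickening δ B) + ENNReal.ofReal δ := le_add_self
  have hδ0 : 0 < δ := hε.trans hεδ
  have key := mul_measureReal_le_mul_measureReal_thickening_add_blDist μ ν hδ0 hδ1.le hB
  have h_sq : blDist μ ν ≤ δ * δ := by nlinarith
  have h_real : μ.real B ≤ ν.real (thickening δ B) + δ :=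
    le_of_mul_le_mul_left (by linarith) hδ0
  rwa [← ENNReal.toReal_le_toReal (measure_ne_top μ B) (by finiteness),
    ENNReal.toReal_add (measure_ne_top _ _) ENNReal.ofReal_ne_top, ENNReal.toReal_ofReal hδ0.le]

lemma levyProkhorovDist_le_sqrt_blDist [IsProbabilityMeasure μ] [IsProbabilityMeasure ν] :
    levyProkhorovDist μ ν ≤ √(blDist μ ν) := by
  refine le_of_forall_gt_imp_ge_of_dense fun ε hε ↦ ?_
  have hε0 : 0 < ε := (Real.sqrt_nonneg _).trans_lt hε
  exact levyProkhorovDist_le_of_blDist_le_sq μ ν hε0 ((Real.sqrt_lt' hε0).mp hε).le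

end BoundedLipschitz

theorem blDist_tendsto_zero_iff_levyProkhorov_general
    {X : Type*} [MetricSpace X] [MeasurableSpace X] [BorelSpace X]
    (μ ν : ℕ → Measure X)
    (hμp : ∀ j, IsProbabilityMeasure (μ j)) (hνp : ∀ j, IsProbabilityMeasure (ν j)) :
    Tendsto (fun j => blDist (μ j) (ν j)) atTop (nhds 0) ↔
    Tendsto (fun j => levyProkhorovDist (μ j) (ν j)) atTop (nhds 0) := by
  constructor
  · intro h
    refine squeeze_zero (fun j ↦ ENNReal.toReal_nonneg)
      (fun j ↦ levyProkhorovDist_le_sqrt_blDist (μ j) (ν j)) ?_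
    simpa using h.sqrt
  · intro h
    refine squeeze_zero (fun j ↦ blDist_nonneg (μ j) (ν j))
      (fun j ↦ blDist_le_three_mul_levyProkhorovDist (μ j) (ν j)) ?_
    simpa using h.const_mul 3

/-- for sequences of tight probability measures, convergence to `0` of the
bounded-Lipschitz norms `‖μ_j − ν_j‖_d` is equivalent to convergence to `0` of the
Lévy–Prokhorov distances `ρ(μ_j, ν_j)`. -/
theorem blDist_tendsto_zero_iff_levyProkhorov
    {X : Type*} [MetricSpace X] [MeasurableSpace X] [BorelSpace X]
    (μ ν : ℕ → Measure X)
    (hμp : ∀ j, IsProbabilityMeasure (μ j)) (hνp : ∀ j, IsProbabilityMeasure (ν j))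
    (hμt : ∀ j, (μ j).InnerRegular) (hνt : ∀ j, (ν j).InnerRegular) :
    Tendsto (fun j => blDist (μ j) (ν j)) atTop (nhds 0) ↔
    Tendsto (fun j => levyProkhorovDist (μ j) (ν j)) atTop (nhds 0) :=
  blDist_tendsto_zero_iff_levyProkhorov_general μ ν hμp hνp
end

section
/- Let X, Y be metric spaces and φ : X → Y a uniformly continuous map. Then the push-forward map μ ↦ φ_*μ on tight probability measures is uniformly continuous from (tProb(X), bounded-Lipschitz metric of X) to (tProb(Y), bounded-Lipschitz metric of Y). -/
/-!
For a test function `g` on `Y`, the function `g ∘ φ` is bounded by `1` and has a modulus of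
continuity that depends only on `φ`: if `d(x, y) < r` then `g (φ y) ≤ g (φ x) + η`. Its
sup-convolution `F x = ⨆ y, g (φ y) - K d(x, y)` with `K r ≥ 2` is `K`-Lipschitz, bounded by
`1`, and satisfies `g ∘ φ ≤ F ≤ g ∘ φ + η`, so testing `μ - ν` against `F / K` gives
`∫ g d(φ_*μ) - ∫ g d(φ_*ν) ≤ K ‖μ - ν‖_d + η`.
-/

open MeasureTheory

open scoped NNReal

section LipschitzMajorant

variable {X : Type*} [PseudoMetricSpace X] {K : ℝ≥0} {h : X → ℝ} {M : ℝ}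

noncomputable def lipschitzMajorant (K : ℝ≥0) (h : X → ℝ) (x : X) : ℝ :=
  ⨆ y, h y - K * dist x y

lemma bddAbove_range_sub_mul_dist (hM : ∀ y, h y ≤ M) (x : X) :
    BddAbove (Set.range fun y => h y - K * dist x y) := by
  refine ⟨M, ?_⟩
  rintro _ ⟨y, rfl⟩
  have := mul_nonneg K.coe_nonneg (dist_nonneg (x := x) (y := y))
  linarith [hM y]

lemma le_lipschitzMajorant (hM : ∀ y, h y ≤ M) (x : X) : h x ≤ lipschitzMajorant K h x := by
  simpa [lipschitzMajorant] using le_ciSup (bddAbove_range_sub_mul_dist (K := K) hM x) x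

lemma lipschitzMajorant_le (hM : ∀ y, h y ≤ M) (x : X) : lipschitzMajorant K h x ≤ M := by
  have : Nonempty X := ⟨x⟩
  refine ciSup_le fun y => ?_
  have := mul_nonneg K.coe_nonneg (dist_nonneg (x := x) (y := y))
  linarith [hM y]

lemma lipschitzWith_lipschitzMajorant (hM : ∀ y, h y ≤ M) :
    LipschitzWith K (lipschitzMajorant K h) := by
  refine LipschitzWith.of_le_add_mul K fun x x' => ?_
  have : Nonempty X := ⟨x⟩
  refine ciSup_le fun y => ?_
  have h₁ : h y - K * dist x' y ≤ lipschitzMajorant K h x' :=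
    le_ciSup (bddAbove_range_sub_mul_dist hM x') y
  have h₂ : K * dist x' y ≤ K * dist x x' + K * dist x y := by
    rw [← mul_add, dist_comm x x']
    exact mul_le_mul_of_nonneg_left (dist_triangle _ _ _) K.coe_nonneg
  linarith

lemma lipschitzMajorant_le_add {x : X} {r η : ℝ} (hη : 0 ≤ η)
    (hnear : ∀ y, dist x y < r → h y ≤ h x + η) (hfar : ∀ y, h y ≤ h x + K * r) :
    lipschitzMajorant K h x ≤ h x + η := by
  have : Nonempty X := ⟨x⟩
  refine ciSup_le fun y => ?_
  rcases lt_or_ge (dist x y) r with hxy | hxy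
  · have := mul_nonneg K.coe_nonneg (dist_nonneg (x := x) (y := y))
    linarith [hnear y hxy]
  · have := mul_le_mul_of_nonneg_left hxy K.coe_nonneg
    linarith [hfar y]

end LipschitzMajorant

section BoundedLipschitz

variable {X : Type*} [MeasurableSpace X] {μ ν : Measure X}

lemma abs_integral_le_one_of_abs_le_one [IsProbabilityMeasure μ] {f : X → ℝ}
    (hf : ∀ x, |f x| ≤ 1) : |∫ x, f x ∂μ| ≤ 1 := by
  simpa using norm_integral_le_of_norm_le_const (μ := μ) (f := f) (C := 1) (.of_forall hf)

variable [MetricSpace X]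

lemma blDist_le_of_forall {c : ℝ}
    (h : ∀ f : X → ℝ, (∀ x, |f x| ≤ 1) → LipschitzWith 1 f →
      ∫ x, f x ∂μ - ∫ x, f x ∂ν ≤ c) :
    blDist μ ν ≤ c := by
  have : Nonempty {f : X → ℝ // (∀ x, |f x| ≤ 1) ∧ LipschitzWith 1 f} :=
    ⟨⟨0, by simp, (LipschitzWith.const 0).weaken zero_le_one⟩⟩
  exact ciSup_le fun f => h f.1 f.2.1 f.2.2

variable [IsProbabilityMeasure μ] [IsProbabilityMeasure ν]

lemma integral_sub_integral_le_blDist {f : X → ℝ} (hf : ∀ x, |f x| ≤ 1)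
    (hfL : LipschitzWith 1 f) : ∫ x, f x ∂μ - ∫ x, f x ∂ν ≤ blDist μ ν := by
  refine le_ciSup (f := fun g : {f : X → ℝ // (∀ x, |f x| ≤ 1) ∧ LipschitzWith 1 f} =>
    ∫ x, g.1 x ∂μ - ∫ x, g.1 x ∂ν) ⟨2, ?_⟩ ⟨f, hf, hfL⟩
  rintro _ ⟨g, rfl⟩
  have hμ := abs_le.mp (abs_integral_le_one_of_abs_le_one (μ := μ) g.2.1)
  have hν := abs_le.mp (abs_integral_le_one_of_abs_le_one (μ := ν) g.2.1)
  dsimp only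
  linarith [hμ.2, hν.1]

lemma integral_sub_integral_le_mul_blDist {K : ℝ≥0} (hK : 0 < K) {F : X → ℝ}
    (hF : ∀ x, |F x| ≤ K) (hFL : LipschitzWith K F) :
    ∫ x, F x ∂μ - ∫ x, F x ∂ν ≤ K * blDist μ ν := by
  have hK' : (0 : ℝ) < K := hK
  have hscaled : LipschitzWith 1 fun x => F x / K := by
    refine LipschitzWith.of_dist_le_mul fun x y => ?_
    rw [NNReal.coe_one, one_mul, Real.dist_eq, ← sub_div, abs_div, abs_of_pos hK',
      div_le_iff₀ hK', mul_comm, ← Real.dist_eq]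
    exact hFL.dist_le_mul x y
  have hbound : ∀ x, |F x / K| ≤ 1 := fun x => by
    rw [abs_div, abs_of_pos hK', div_le_one hK']
    exact hF x
  have := integral_sub_integral_le_blDist (μ := μ) (ν := ν) hbound hscaled
  rw [integral_div, integral_div, ← sub_div, div_le_iff₀ hK'] at this
  linarith

lemma integral_sub_integral_le_mul_blDist_add [OpensMeasurableSpace X] {h : X → ℝ}
    (hh : Measurable h) (hb : ∀ x, |h x| ≤ 1) {K : ℝ≥0} {r η : ℝ} (hK : 1 ≤ K)
    (hKr : 2 ≤ K * r) (hη : 0 ≤ η) (hmod : ∀ x y, dist x y < r → h y ≤ h x + η) :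
    ∫ x, h x ∂μ - ∫ x, h x ∂ν ≤ K * blDist μ ν + η := by
  have hle : ∀ x, h x ≤ 1 := fun x => (abs_le.mp (hb x)).2
  set F := lipschitzMajorant K h
  have hFL : LipschitzWith K F := lipschitzWith_lipschitzMajorant hle
  have h_le_F : ∀ x, h x ≤ F x := le_lipschitzMajorant hle
  have hF_le : ∀ x, F x ≤ h x + η := fun x =>
    lipschitzMajorant_le_add hη (hmod x) fun y => by linarith [hle y, (abs_le.mp (hb x)).1]
  have hF_abs : ∀ x, |F x| ≤ K := fun x => abs_le.mpr
    ⟨by linarith [(abs_le.mp (hb x)).1, h_le_F x], (lipschitzMajorant_le hle x).trans hK⟩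
  have hF_int : ∀ κ : Measure X, [IsProbabilityMeasure κ] → Integrable F κ := fun κ _ =>
    .of_bound hFL.continuous.aestronglyMeasurable K (.of_forall hF_abs)
  have hh_int : ∀ κ : Measure X, [IsProbabilityMeasure κ] → Integrable h κ := fun κ _ =>
    .of_bound hh.aestronglyMeasurable 1 (.of_forall hb)
  have hμ : ∫ x, h x ∂μ ≤ ∫ x, F x ∂μ := integral_mono (hh_int μ) (hF_int μ) h_le_F
  have hν : ∫ x, F x ∂ν ≤ ∫ x, h x ∂ν + η := by
    simpa [integral_add (hh_int ν) (integrable_const η)] using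
      integral_mono (hF_int ν) ((hh_int ν).add (integrable_const η)) hF_le
  linarith [integral_sub_integral_le_mul_blDist (μ := μ) (ν := ν)
    (zero_lt_one.trans_le hK) hF_abs hFL]

lemma blDist_map_le [OpensMeasurableSpace X] {Y : Type*} [MetricSpace Y] [MeasurableSpace Y]
    [OpensMeasurableSpace Y] {φ : X → Y} (hφ : Measurable φ) {K : ℝ≥0} {r η : ℝ}
    (hK : 1 ≤ K) (hKr : 2 ≤ K * r) (hη : 0 ≤ η)
    (hmod : ∀ x y, dist x y < r → dist (φ x) (φ y) ≤ η) :
    blDist (μ.map φ) (ν.map φ) ≤ K * blDist μ ν + η := by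
  refine blDist_le_of_forall fun g hg hgL => ?_
  rw [integral_map hφ.aemeasurable hgL.continuous.aestronglyMeasurable,
    integral_map hφ.aemeasurable hgL.continuous.aestronglyMeasurable]
  refine integral_sub_integral_le_mul_blDist_add (hgL.continuous.measurable.comp hφ)
    (fun x => hg (φ x)) hK hKr hη fun x y hxy => show g (φ y) ≤ g (φ x) + η from ?_
  have := hgL.dist_le_mul (φ y) (φ x)
  rw [NNReal.coe_one, one_mul, Real.dist_eq, dist_comm] at this
  linarith [le_abs_self (g (φ y) - g (φ x)), hmod x y hxy]

end BoundedLipschitz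

/-- if `φ : X → Y` is uniformly continuous then the push-forward map on tight
probability measures is uniformly continuous from the bounded-Lipschitz metric of `X` to
the bounded-Lipschitz metric of `Y`. -/
theorem pushforward_uniformlyContinuous_blDist
    {X Y : Type*} [MetricSpace X] [MeasurableSpace X] [BorelSpace X]
    [MetricSpace Y] [MeasurableSpace Y] [BorelSpace Y]
    (φ : X → Y) (hφ : UniformContinuous φ) :
    ∀ ε : ℝ, 0 < ε → ∃ δ : ℝ, 0 < δ ∧
      ∀ μ ν : Measure X, IsProbabilityMeasure μ → IsProbabilityMeasure ν →
        μ.InnerRegular → ν.InnerRegular →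
        blDist μ ν < δ → blDist (μ.map φ) (ν.map φ) < ε := by
  intro ε hε
  obtain ⟨r, hr, hφr⟩ := Metric.uniformContinuous_iff.mp hφ (ε / 2) (half_pos hε)
  obtain ⟨K, hK, hKr⟩ : ∃ K : ℝ≥0, 1 ≤ K ∧ 2 ≤ K * r := by
    refine ⟨⟨max 1 (2 / r), by positivity⟩, NNReal.coe_le_coe.mp (le_max_left _ _), ?_⟩
    calc (2 : ℝ) = 2 / r * r := (div_mul_cancel₀ 2 hr.ne').symm
      _ ≤ max 1 (2 / r) * r := by gcongr; exact le_max_right _ _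
  have hK0 : (0 : ℝ) < K := zero_lt_one.trans_le hK
  refine ⟨ε / (2 * K), by positivity, fun μ ν _ _ _ _ hμν => ?_⟩
  calc blDist (μ.map φ) (ν.map φ)
      ≤ K * blDist μ ν + ε / 2 := blDist_map_le hφ.continuous.measurable hK hKr
        (by positivity) fun x y hxy => (hφr hxy).le
    _ < K * (ε / (2 * K)) + ε / 2 := by gcongr
    _ = ε := by field_simp; ring
end

section
/- The uniformity induced on tight probability measures on ℝ by the family of pseudometrics (μ, ν) ↦ |∫ f dμ − ∫ f dν| over all bounded continuous functions f (the Cb(ℝ)-weak uniformity) does not satisfy the following property: whenever x_j, y_j are real sequences with |x_j − y_j| → 0, the point masses δ(x_j) asymptotically approximate δ(y_j), i.e., for every bounded continuous f, ∫ f dδ(x_j) − ∫ f dδ(y_j) → 0. Concretely: there exists a bounded continuous function f on ℝ such that f(j) − f(j + 1/j) = 1 for all j ≥ 1. -/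
/-!
Two applications of Urysohn's lemma. For `j ≥ 2` the points `j + 1/j` lie in `(j, j + 1/2]`, so
they are at mutual distance at least `1/2` and avoid `ℕ`; both sets are therefore closed and
disjoint, and Urysohn gives `g` equal to `1` on `ℕ` and `0` at every `j + 1/j`. This handles
`j ≥ 2`; for `j = 1` the point `1 + 1/1 = 2` is itself a natural number, which is repaired by
adding a second Urysohn function equal to `1` at `1` and `0` on `[2, ∞)`.
-/

open Filter Set Topology

lemma natCast_add_one_div_mem_Ioc {j : ℕ} (hj : 2 ≤ j) :
    (j : ℝ) + 1 / j ∈ Ioc (j : ℝ) (j + 1 / 2) := by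
  have h2j : (2 : ℝ) ≤ j := by exact_mod_cast hj
  have hpos : (0 : ℝ) < 1 / j := by positivity
  exact ⟨by linarith, by gcongr⟩

lemma isClosed_image_natCast_add_one_div :
    IsClosed ((fun j : ℕ => (j : ℝ) + 1 / j) '' Ici 2) := by
  have spaced : ∀ j k : ℕ, 2 ≤ j → j < k → 1 / 2 ≤ dist ((k : ℝ) + 1 / k) (j + 1 / j) := by
    intro j k hj hjk
    have hk := natCast_add_one_div_mem_Ioc (hj.trans hjk.le)
    have hj' := natCast_add_one_div_mem_Ioc hj
    have hjk' : (j : ℝ) + 1 ≤ k := by exact_mod_cast hjk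
    rw [Real.dist_eq, abs_of_pos] <;> linarith [hk.1, hj'.2]
  refine Metric.isClosed_of_pairwise_le_dist (ε := 1 / 2) (by norm_num) ?_
  rintro _ ⟨j, hj, rfl⟩ _ ⟨k, hk, rfl⟩ hne
  rcases lt_or_gt_of_ne (fun hjk : j = k => hne (hjk ▸ rfl)) with h | h
  · rw [dist_comm]
    exact spaced j k hj h
  · exact spaced k j hk h

lemma disjoint_image_natCast_add_one_div_range_natCast :
    Disjoint ((fun j : ℕ => (j : ℝ) + 1 / j) '' Ici 2) (range ((↑) : ℕ → ℝ)) := by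
  rw [disjoint_left]
  rintro _ ⟨j, hj, rfl⟩ ⟨n, hn⟩
  obtain ⟨hlo, hhi⟩ := natCast_add_one_div_mem_Ioc hj
  simp only at hn
  rw [← hn] at hlo hhi
  have hlt : j < n := by exact_mod_cast hlo
  have hlt' : n < j + 1 := by exact_mod_cast (by linarith : (n : ℝ) < j + 1)
  omega

theorem exists_bounded_continuous_sub_eq_one_at_natCast_add_one_div :
    ∃ f : C(ℝ, ℝ), (∀ x, |f x| ≤ 2) ∧ ∀ j : ℕ, 1 ≤ j → f j - f (j + 1 / j) = 1 := by
  obtain ⟨g, hg0, hg1, hg⟩ := exists_continuous_zero_one_of_isClosed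
    isClosed_image_natCast_add_one_div Nat.isClosedEmbedding_coe_real.isClosed_range
    disjoint_image_natCast_add_one_div_range_natCast
  obtain ⟨h, hh0, hh1, hh⟩ := exists_continuous_zero_one_of_isClosed isClosed_Ici isClosed_singleton
    (disjoint_singleton_right.2 (by norm_num) : Disjoint (Ici (2 : ℝ)) {1})
  refine ⟨g + h, fun x => ?_, fun j hj => ?_⟩
  · rw [ContinuousMap.add_apply, abs_le]
    constructor <;> linarith [(hg x).1, (hg x).2, (hh x).1, (hh x).2]
  · simp only [ContinuousMap.add_apply]
    rcases hj.eq_or_lt with rfl | hj2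
    · have hpt : ((1 : ℕ) : ℝ) + 1 / ((1 : ℕ) : ℝ) = 2 := by norm_num
      rw [hpt, Nat.cast_one, hg1 ⟨1, Nat.cast_one⟩, hg1 ⟨2, Nat.cast_two⟩, hh1 rfl,
        hh0 (le_refl (2 : ℝ))]
      norm_num
    · have h2j : (2 : ℝ) ≤ j := by exact_mod_cast hj2
      rw [hg1 ⟨j, rfl⟩, hg0 ⟨j, hj2, rfl⟩, hh0 h2j,
        hh0 (h2j.trans (natCast_add_one_div_mem_Ioc hj2).1.le)]
      norm_num

/-- there is a bounded continuous function `f : ℝ → ℝ` with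
`f(j) − f(j + 1/j) = 1` for all integers `j ≥ 1`; consequently the `Cb(ℝ)`-weak uniformity
on probability measures fails property (A1): it is not true that for all real sequences
`x_j, y_j` with `|x_j − y_j| → 0` and every bounded continuous `g` one has
`g(x_j) − g(y_j) → 0` (i.e. `δ(x_j)` need not asymptotically approximate `δ(y_j)`). -/
theorem cbWeak_fails_A1 :
    (∃ f : ℝ → ℝ, Continuous f ∧ (∃ C, ∀ x, |f x| ≤ C) ∧
      ∀ j : ℕ, 1 ≤ j → f j - f (j + 1 / j) = 1) ∧
    ¬ (∀ x y : ℕ → ℝ,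
        Tendsto (fun j => |x j - y j|) atTop (nhds 0) →
        ∀ g : ℝ → ℝ, Continuous g → (∃ C, ∀ t, |g t| ≤ C) →
          Tendsto (fun j => g (x j) - g (y j)) atTop (nhds 0)) := by
  obtain ⟨f, hbound, hjump⟩ := exists_bounded_continuous_sub_eq_one_at_natCast_add_one_div
  refine ⟨⟨f, f.continuous, ⟨2, hbound⟩, hjump⟩, fun hA1 => ?_⟩
  have hdist : Tendsto (fun j : ℕ => |(j : ℝ) - (j + 1 / j)|) atTop (𝓝 0) := by
    simpa using tendsto_one_div_atTop_nhds_zero_nat (𝕜 := ℝ)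
  have hzero := hA1 _ _ hdist f f.continuous ⟨2, hbound⟩
  have hone : Tendsto (fun j : ℕ => f j - f (j + 1 / j)) atTop (𝓝 1) :=
    tendsto_const_nhds.congr' (eventually_atTop.2 ⟨1, fun j hj => (hjump j hj).symm⟩)
  exact one_ne_zero (tendsto_nhds_unique hone hzero)
end
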